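/- Let q ≥ 0, let S* = {z ∈ ℝ : z² ≥ q}, and let S ⊆ ℝ be measurable with N(0,1)(S) = N(0,1)(S*) = a > 0. Then for every t ≥ 0, P_{z ~ N(0,1,S)}(z² ≥ t) ≤ P_{z ~ N(0,1,S*)}(z² ≥ t); that is, among all truncation sets of Gaussian mass a, the two-sided tail set S* stochastically dominates the distribution of z². -/
import Mathlib


open MeasureTheory ProbabilityTheory Real
open scoped RealInnerProductSpace ENNReal

/-- The survival probability `α(μ; S) = N(μ,1)(S)`. -/
noncomputable def survival (μ : ℝ) (S : Set ℝ) : ℝ :=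
  (gaussianReal μ 1 S).toReal

/-- The truncated Gaussian `N(μ,1,S)`, i.e. `N(μ,1)` conditioned on `S`. -/
noncomputable def truncGaussian (μ : ℝ) (S : Set ℝ) : Measure ℝ :=
  (gaussianReal μ 1)[|S]

theorem stmt5 (q : ℝ) (hq : 0 ≤ q) (S : Set ℝ) (hS : MeasurableSet S) (a : ℝ) (ha : 0 < a)
    (hSmass : gaussianReal 0 1 S = ENNReal.ofReal a)
    (hSstarMass : gaussianReal 0 1 {z : ℝ | q ≤ z ^ 2} = ENNReal.ofReal a)
    (t : ℝ) (ht : 0 ≤ t) :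
    truncGaussian 0 S {z : ℝ | t ≤ z ^ 2} ≤
      truncGaussian 0 {z : ℝ | q ≤ z ^ 2} {z : ℝ | t ≤ z ^ 2} := by
  have hSstar : MeasurableSet {z : ℝ | q ≤ z ^ 2} :=
    measurableSet_le measurable_const (by fun_prop)
  unfold truncGaussian
  rw [cond_apply hS, cond_apply hSstar, hSmass, hSstarMass]
  refine mul_le_mul_right ?_ _
  rcases le_or_gt t q with h | h
  · have : {z : ℝ | q ≤ z ^ 2} ∩ {z : ℝ | t ≤ z ^ 2} = {z : ℝ | q ≤ z ^ 2} := by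
      ext z; simp only [Set.mem_inter_iff, Set.mem_setOf_eq]
      exact ⟨fun hz => hz.1, fun hz => ⟨hz, h.trans hz⟩⟩
    rw [this, hSstarMass, ← hSmass]
    exact measure_mono Set.inter_subset_left
  · have : {z : ℝ | q ≤ z ^ 2} ∩ {z : ℝ | t ≤ z ^ 2} = {z : ℝ | t ≤ z ^ 2} := by
      ext z; simp only [Set.mem_inter_iff, Set.mem_setOf_eq]
      exact ⟨fun hz => hz.2, fun hz => ⟨(h.le.trans hz), hz⟩⟩
    rw [this]
    exact measure_mono Set.inter_subset_right
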